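/- Let β > 0 and define u : ℝ × ℝ → ℝ by u(x,t) = (1 + exp(√(β/6)·x − (5β/6)·t))^(−2). Then u is a classical solution of Fisher's equation with λ = 1: for all (x,t) ∈ ℝ × ℝ, ∂u/∂t (x,t) = ∂²u/∂x² (x,t) + β·u(x,t)·(1 − u(x,t)). -/

import Mathlib

/-!
Writing `u(x,t) = w(a x - c t)` with `a = √(β/6)`, `c = 5β/6` and `w = σ²`, where
`σ(z) = 1/(1 + eᶻ)` satisfies the logistic equation `σ' = -σ(1 - σ)`, every derivative of
`w` is a polynomial in `σ`. Fisher's equation for `u` becomes the profile ODE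
`-c w' = a² w'' + β w (1 - w)`, and both sides reduce to `(5β/3) σ² (1 - σ)`.
-/

open Real

section TravelingWave

variable {f f' f'' : ℝ → ℝ} {a c : ℝ}

theorem hasDerivAt_travelingWave_space {d x : ℝ} (t : ℝ) (hf : HasDerivAt f d (a * x - c * t)) :
    HasDerivAt (fun ξ => f (a * ξ - c * t)) (a * d) x := by
  have hz : HasDerivAt (fun ξ => a * ξ - c * t) a x := by
    simpa using ((hasDerivAt_id x).const_mul a).sub_const (c * t)
  exact (hf.comp x hz).congr_deriv (mul_comm d a)

theorem hasDerivAt_travelingWave_time {d t : ℝ} (x : ℝ) (hf : HasDerivAt f d (a * x - c * t)) :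
    HasDerivAt (fun τ => f (a * x - c * τ)) (-c * d) t := by
  have hz : HasDerivAt (fun τ => a * x - c * τ) (-c) t := by
    simpa using ((hasDerivAt_id t).const_mul c).const_sub (a * x)
  exact (hf.comp t hz).congr_deriv (mul_comm d (-c))

theorem deriv_travelingWave_space (hf : ∀ z, HasDerivAt f (f' z) z) (t : ℝ) :
    deriv (fun ξ => f (a * ξ - c * t)) = fun ξ => a * f' (a * ξ - c * t) :=
  funext fun _ => (hasDerivAt_travelingWave_space t (hf _)).deriv

theorem travelingWave_solves_fisher (hf : ∀ z, HasDerivAt f (f' z) z)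
    (hf' : ∀ z, HasDerivAt f' (f'' z) z) {β : ℝ}
    (hode : ∀ z, -c * f' z = a ^ 2 * f'' z + β * f z * (1 - f z)) (x t : ℝ) :
    Differentiable ℝ (fun τ => f (a * x - c * τ)) ∧
      Differentiable ℝ (fun ξ => f (a * ξ - c * t)) ∧
      Differentiable ℝ (deriv fun ξ => f (a * ξ - c * t)) ∧
      deriv (fun τ => f (a * x - c * τ)) t =
        deriv (deriv fun ξ => f (a * ξ - c * t)) x +
          β * f (a * x - c * t) * (1 - f (a * x - c * t)) := by
  have hxx (y : ℝ) : HasDerivAt (deriv fun ξ => f (a * ξ - c * t))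
      (a * (a * f'' (a * y - c * t))) y := by
    rw [deriv_travelingWave_space hf t]
    exact (hasDerivAt_travelingWave_space t (hf' _)).const_mul a
  refine ⟨fun τ => (hasDerivAt_travelingWave_time x (hf _)).differentiableAt,
    fun _ => (hasDerivAt_travelingWave_space t (hf _)).differentiableAt,
    fun y => (hxx y).differentiableAt, ?_⟩
  rw [(hasDerivAt_travelingWave_time x (hf _)).deriv, (hxx x).deriv, hode]
  ring

end TravelingWave

namespace FisherWave

noncomputable def sigma (z : ℝ) : ℝ := (1 + exp z)⁻¹

noncomputable def profile (z : ℝ) : ℝ := sigma z ^ 2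

noncomputable def profileDeriv (z : ℝ) : ℝ := -2 * sigma z ^ 2 * (1 - sigma z)

noncomputable def profileDeriv2 (z : ℝ) : ℝ := sigma z ^ 2 * (1 - sigma z) * (4 - 6 * sigma z)

theorem profile_eq (z : ℝ) : profile z = (1 + exp z) ^ (-2 : ℤ) := by
  rw [profile, sigma, zpow_neg, inv_pow]
  norm_cast

theorem hasDerivAt_sigma (z : ℝ) : HasDerivAt sigma (-(sigma z * (1 - sigma z))) z := by
  have hpos : 0 < 1 + exp z := by positivity
  refine (((hasDerivAt_exp z).const_add 1).fun_inv hpos.ne').congr_deriv ?_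
  simp only [sigma]
  field_simp
  ring

theorem hasDerivAt_profile (z : ℝ) : HasDerivAt profile (profileDeriv z) z :=
  ((hasDerivAt_sigma z).fun_pow 2).congr_deriv (by simp only [profileDeriv]; ring)

theorem hasDerivAt_profileDeriv (z : ℝ) : HasDerivAt profileDeriv (profileDeriv2 z) z := by
  have hs := hasDerivAt_sigma z
  exact (((hs.fun_pow 2).const_mul (-2)).mul (hs.const_sub 1)).congr_deriv
    (by simp only [profileDeriv2]; ring)

theorem profile_ode {β a c : ℝ} (ha : a ^ 2 = β / 6) (hc : c = 5 * β / 6) (z : ℝ) :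
    -c * profileDeriv z = a ^ 2 * profileDeriv2 z + β * profile z * (1 - profile z) := by
  simp only [profileDeriv, profileDeriv2, profile, ha, hc]
  ring

end FisherWave

open FisherWave in
theorem fisher_traveling_wave_solves_fisher (β : ℝ) (hβ : 0 < β)
    (u : ℝ → ℝ → ℝ)
    (hu : u = fun x t =>
      (1 + Real.exp (Real.sqrt (β / 6) * x - (5 * β / 6) * t)) ^ (-2 : ℤ)) :
    ∀ x t : ℝ,
      Differentiable ℝ (fun τ => u x τ) ∧
      Differentiable ℝ (fun ξ => u ξ t) ∧
      Differentiable ℝ (deriv (fun ξ => u ξ t)) ∧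
      deriv (fun τ => u x τ) t =
        deriv (deriv (fun ξ => u ξ t)) x + β * u x t * (1 - u x t) := by
  subst hu
  simp only [← profile_eq]
  have ha : Real.sqrt (β / 6) ^ 2 = β / 6 := Real.sq_sqrt (by positivity)
  exact travelingWave_solves_fisher hasDerivAt_profile hasDerivAt_profileDeriv
    (profile_ode ha rfl)
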